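/- For positive integers a and b with b ≤ a, the sum over m from 1 to b of [C(b,m)/C(a,m)]·(1/(m+1)) equals ((a+1)/(b+1))·(H_{a+1} - H_{a-b}) - 1. -/

import Mathlib

/-!
Absorption, `C(b,m)/(m+1) = C(b+1,m+1)/(b+1)`, turns the sum into `Σ_{m ≤ b} C(b+1,m+1)/C(a,m)`.
By Pascal's rule (hockey stick) this is `Σ_{n ≤ b} Σ_{j ≤ n} C(n,j)/C(a,j)`, and each inner sum
telescopes to `(a+1)/(a+1-n)`, since `(a+1)/(a+1-n) · C(n,j)/C(a+1,j)` is an antidifference of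
its summand. Summing over `n ≤ b` gives `(a+1)(H_{a+1} - H_{a-b})`.
-/

/-- The `k`-th harmonic number `1 + 1/2 + ⋯ + 1/k`, with `H 0 = 0`. -/
def H (k : ℕ) : ℚ := ∑ i ∈ Finset.range k, (1 : ℚ) / (i + 1)

open Finset

section CastChoose

variable {K : Type*} [Field K]

theorem Nat.cast_choose_succ_right_mul (n k : ℕ) :
    (n.choose (k + 1) : K) * (k + 1) = n.choose k * (n - k) := by
  rcases le_or_gt k n with hk | hk
  · have h := congrArg (Nat.cast : ℕ → K) (Nat.choose_succ_right_eq n k)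
    push_cast [Nat.cast_sub hk] at h
    exact h
  · simp [Nat.choose_eq_zero_of_lt hk, Nat.choose_eq_zero_of_lt (hk.trans k.lt_succ_self)]

theorem Nat.cast_choose_mul_succ {n k : ℕ} (hk : k ≤ n + 1) :
    (n.choose k : K) * (n + 1) = (n + 1).choose k * (n + 1 - k) := by
  have h := congrArg (Nat.cast : ℕ → K) (Nat.choose_mul_succ_eq n k)
  push_cast [Nat.cast_sub hk] at h
  exact h

variable [CharZero K]

theorem Nat.cast_choose_div_succ (n k : ℕ) :
    (n.choose k : K) / (k + 1) = (n + 1).choose (k + 1) / (n + 1) := by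
  have h := congrArg (Nat.cast : ℕ → K) (Nat.add_one_mul_choose_eq n k)
  push_cast at h
  have hk : (k + 1 : K) ≠ 0 := Nat.cast_add_one_ne_zero k
  have hn : (n + 1 : K) ≠ 0 := Nat.cast_add_one_ne_zero n
  field_simp
  linear_combination h

theorem Nat.cast_add_one_sub_ne_zero {n k : ℕ} (hk : k ≤ n) : (n + 1 - k : K) ≠ 0 := by
  have h : ((n + 1 - k : ℕ) : K) = n + 1 - k := by
    push_cast [Nat.cast_sub (by omega : k ≤ n + 1)]
    rfl
  exact h ▸ Nat.cast_ne_zero.mpr (by omega)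

theorem sum_range_choose_div_choose {n a : ℕ} (hn : n ≤ a) :
    ∑ j ∈ range (n + 1), (n.choose j : K) / a.choose j = (a + 1) / (a + 1 - n) := by
  set f : ℕ → K := fun j ↦ (a + 1) / (a + 1 - n) * (n.choose j / (a + 1).choose j)
  have telescope : ∀ j ∈ range (n + 1), (n.choose j : K) / a.choose j = f j - f (j + 1) := by
    intro j hj
    have hja : j ≤ a := (Nat.lt_succ_iff.mp (mem_range.mp hj)).trans hn
    have hca : (a.choose j : K) ≠ 0 := by exact_mod_cast (Nat.choose_pos hja).ne'
    have hcA : ((a + 1).choose j : K) ≠ 0 := by exact_mod_cast (Nat.choose_pos (by omega)).ne'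
    have hcA' : ((a + 1).choose (j + 1) : K) ≠ 0 := by
      exact_mod_cast (Nat.choose_pos (by omega)).ne'
    have hn' : (a + 1 - n : K) ≠ 0 := Nat.cast_add_one_sub_ne_zero hn
    have hj : (a + 1 - j : K) ≠ 0 := Nat.cast_add_one_sub_ne_zero hja
    have e1 := Nat.cast_choose_succ_right_mul (K := K) n j
    have e2 := Nat.cast_choose_succ_right_mul (K := K) (a + 1) j
    have e3 := Nat.cast_choose_mul_succ (K := K) (show j ≤ a + 1 by omega)
    push_cast at e2
    simp only [f]
    field_simp
    -- `e1` and `e2` express `C(·, j+1)` through `C(·, j)` only after multiplying by `j + 1`.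
    refine mul_right_cancel₀ (Nat.cast_add_one_ne_zero (R := K) j) ?_
    linear_combination
      (n.choose j * (a + 1 - n) * (a + 1).choose j - a.choose j * (a + 1) * n.choose j) * e2
        + a.choose j * (a + 1) * (a + 1).choose j * e1
        - n.choose j * (a + 1).choose j * (a + 1 - n) * e3
  rw [sum_congr rfl telescope, sum_range_sub']
  simp [f, Nat.choose_succ_self]

end CastChoose

theorem H_succ (k : ℕ) : H (k + 1) = H k + 1 / (k + 1) := by
  simp only [H, sum_range_succ]

theorem H_add_one_sub_H {a b : ℕ} (hb : b ≤ a) :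
    H (a + 1) - H (a - b) = ∑ n ∈ range (b + 1), 1 / ((a : ℚ) + 1 - n) := by
  induction b with
  | zero => simp [H_succ]
  | succ b ih =>
    have hab : a - b = a - (b + 1) + 1 := by omega
    have hcast : ((a - (b + 1) : ℕ) : ℚ) + 1 = a + 1 - (b + 1 : ℕ) := by
      push_cast [Nat.cast_sub hb]
      ring
    rw [sum_range_succ, ← ih (by omega), hab, H_succ (a - (b + 1)), hcast]
    ring

theorem sum_range_choose_succ_div_choose {a b : ℕ} (hb : b ≤ a) :
    ∑ m ∈ range (b + 1), ((b + 1).choose (m + 1) : ℚ) / a.choose m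
      = ∑ n ∈ range (b + 1), (a + 1) / ((a : ℚ) + 1 - n) := by
  induction b with
  | zero => simp [div_self, Nat.cast_add_one_ne_zero]
  | succ b ih =>
    have pascal : ∀ m, ((b + 2).choose (m + 1) : ℚ) / a.choose m
        = ((b + 1).choose m : ℚ) / a.choose m + ((b + 1).choose (m + 1) : ℚ) / a.choose m := by
      intro m
      rw [Nat.choose_succ_succ, Nat.cast_add, add_div]
    rw [sum_congr rfl fun m _ ↦ pascal m, sum_add_distrib, sum_range_choose_div_choose hb,
      sum_range_succ _ (b + 1), ih (by omega), sum_range_succ _ (b + 1), Nat.choose_succ_self]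
    simp only [Nat.cast_zero, zero_div, add_zero]
    ring

theorem stmt2_general (a b : ℕ) (hba : b ≤ a) :
    ∑ m ∈ Finset.Icc 1 b, ((Nat.choose b m : ℚ) / (Nat.choose a m : ℚ)) * (1 / ((m : ℚ) + 1)) =
      (((a : ℚ) + 1) / ((b : ℚ) + 1)) * (H (a + 1) - H (a - b)) - 1 := by
  have absorb : ∀ m, (b.choose m : ℚ) / a.choose m * (1 / (m + 1))
      = ((b + 1).choose (m + 1) : ℚ) / a.choose m / (b + 1) := by
    intro m
    rw [div_right_comm _ _ ((b : ℚ) + 1), div_mul_eq_mul_div, mul_one_div,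
      Nat.cast_choose_div_succ]
  have split : range (b + 1) = insert 0 (Icc 1 b) := by
    rw [Nat.range_succ_eq_Icc_zero, ← insert_Icc_add_one_left_eq_Icc b.zero_le, zero_add]
  have total : (b + 1 : ℚ) + ∑ m ∈ Icc 1 b, ((b + 1).choose (m + 1) : ℚ) / a.choose m
      = (a + 1) * (H (a + 1) - H (a - b)) := by
    simp only [H_add_one_sub_H hba, mul_sum, mul_one_div]
    rw [← sum_range_choose_succ_div_choose hba, split, sum_insert (by simp)]
    simp
  rw [sum_congr rfl fun m _ ↦ absorb m, ← sum_div, div_mul_eq_mul_div, ← total]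
  field_simp
  ring

theorem stmt2 (a b : ℕ) (ha : 0 < a) (hb : 0 < b) (hba : b ≤ a) :
    ∑ m ∈ Finset.Icc 1 b, ((Nat.choose b m : ℚ) / (Nat.choose a m : ℚ)) * (1 / ((m : ℚ) + 1)) =
      (((a : ℚ) + 1) / ((b : ℚ) + 1)) * (H (a + 1) - H (a - b)) - 1 :=
  stmt2_general a b hba
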